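/- Let F be a binary form of degree d ≥ 3 over ℂ that is a direct sum, i.e. F = c_1 ℓ_1^d + c_2 ℓ_2^d with c_1, c_2 nonzero scalars and ℓ_1, ℓ_2 linearly independent linear forms. Then the decomposition is uniquely determined: if also F = c_1' m_1^d + c_2' m_2^d with c_1', c_2' nonzero and m_1, m_2 linearly independent linear forms, then the unordered pair of lines {⟨ℓ_1⟩, ⟨ℓ_2⟩} equals {⟨m_1⟩, ⟨m_2⟩}. -/

import Mathlib

/-!
Apolarity setup.  `S = ℂ[x_1,…,x_n]` and its dual ring `T = ℂ[α_1,…,α_n]` are both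
realized as `MvPolynomial (Fin n) ℂ`; the apolarity action `Θ ⌟ F` (`contract Θ F`)
lets `α_i` act as the partial differentiation operator `∂/∂x_i`.
-/

open MvPolynomial

noncomputable section Apolarity

/-- Partial derivatives on `ℂ[x_1,…,x_n]` commute. -/
lemma pderiv_pderiv_comm (n : ℕ) (i j : Fin n) (f : MvPolynomial (Fin n) ℂ) :
    pderiv i (pderiv j f) = pderiv j (pderiv i f) := by
  induction f using MvPolynomial.induction_on with
  | C a => simp
  | add p q hp hq => simp [hp, hq]
  | mul_X p k hp =>
    rcases eq_or_ne i k with rfl | hik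
    · rcases eq_or_ne j i with rfl | hjk
      · rfl
      · simp only [pderiv_mul, pderiv_X_self, pderiv_X_of_ne hjk, pderiv_X_of_ne hjk.symm,
          map_add, map_zero, map_one, Derivation.map_one_eq_zero, mul_one, mul_zero,
          add_zero, zero_add, hp]
    · rcases eq_or_ne j k with rfl | hjk
      · simp only [pderiv_mul, pderiv_X_self, pderiv_X_of_ne hik, pderiv_X_of_ne hik.symm,
          map_add, map_zero, map_one, Derivation.map_one_eq_zero, mul_one, mul_zero,
          add_zero, zero_add, hp]
      · simp only [pderiv_mul, pderiv_X_of_ne hik.symm, pderiv_X_of_ne hjk.symm, map_add,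
          map_zero, mul_zero, add_zero, zero_add, hp]

variable (n : ℕ)

/-- The endomorphism `∂/∂x_i` of `S = ℂ[x_1,…,x_n]`. -/
def derOp (i : Fin n) : Module.End ℂ (MvPolynomial (Fin n) ℂ) :=
  (pderiv i).toLinearMap

lemma derOp_commute (i j : Fin n) : Commute (derOp n i) (derOp n j) :=
  LinearMap.ext fun f => pderiv_pderiv_comm n i j f

/-- The commuting product of the operators `(∂/∂x_i)^(m i)`. -/
def piDiffHom : (Fin n → Multiplicative ℕ) →* Module.End ℂ (MvPolynomial (Fin n) ℂ) :=
  MonoidHom.noncommPiCoprod (fun i : Fin n => powersHom _ (derOp n i))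
    (fun i j _ x y => ((derOp_commute n i j).pow_pow x y))

/-- The differential operator `∏ i, (∂/∂x_i)^(m i)` attached to an exponent vector `m`. -/
def diffMonoidHom : Multiplicative (Fin n →₀ ℕ) →* Module.End ℂ (MvPolynomial (Fin n) ℂ) :=
  (piDiffHom n).comp
    (AddMonoidHom.toMultiplicative
      (Finsupp.coeFnAddHom : (Fin n →₀ ℕ) →+ (Fin n → ℕ)))

/-- The apolarity action of the dual ring `T = ℂ[α_1,…,α_n]` on `S = ℂ[x_1,…,x_n]`, as an
algebra homomorphism to differential operators: `α_i` acts as `∂/∂x_i`. -/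
def apolarAlgHom :
    MvPolynomial (Fin n) ℂ →ₐ[ℂ] Module.End ℂ (MvPolynomial (Fin n) ℂ) :=
  AddMonoidAlgebra.lift ℂ _ (Fin n →₀ ℕ) (diffMonoidHom n)

variable {n}

/-- The apolarity action `Θ ⌟ F`: apply to `F` the differential operator obtained from `Θ`
by substituting `∂/∂x_i` for the `i`-th (dual) variable. -/
def contract (Θ F : MvPolynomial (Fin n) ℂ) : MvPolynomial (Fin n) ℂ :=
  apolarAlgHom n Θ F

lemma apolarAlgHom_X (i : Fin n) : apolarAlgHom n (X i) = derOp n i := by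
  classical
  have hX : (X i : MvPolynomial (Fin n) ℂ)
      = AddMonoidAlgebra.single (Finsupp.single i 1) (1 : ℂ) := rfl
  rw [hX]
  rw [show apolarAlgHom n (AddMonoidAlgebra.single (Finsupp.single i 1) (1:ℂ))
      = (1:ℂ) • diffMonoidHom n (Multiplicative.ofAdd (Finsupp.single i 1)) from
    AddMonoidAlgebra.lift_single _ _ _]
  rw [one_smul]
  rw [diffMonoidHom]
  have harg : (AddMonoidHom.toMultiplicative
        (Finsupp.coeFnAddHom : (Fin n →₀ ℕ) →+ (Fin n → ℕ)))
        (Multiplicative.ofAdd (Finsupp.single i 1))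
      = Pi.mulSingle (M := fun _ : Fin n => Multiplicative ℕ) i (Multiplicative.ofAdd 1) := by
    funext j
    rcases eq_or_ne j i with rfl | hj
    · show Multiplicative.ofAdd ((Finsupp.single j 1 : Fin n →₀ ℕ) j)
        = Pi.mulSingle (M := fun _ : Fin n => Multiplicative ℕ) j (Multiplicative.ofAdd 1) j
      rw [Finsupp.single_eq_same, Pi.mulSingle_eq_same]
    · show Multiplicative.ofAdd ((Finsupp.single i 1 : Fin n →₀ ℕ) j)
        = Pi.mulSingle (M := fun _ : Fin n => Multiplicative ℕ) i (Multiplicative.ofAdd 1) j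
      rw [Finsupp.single_eq_of_ne' (Ne.symm hj), Pi.mulSingle_eq_of_ne hj]
      exact ofAdd_zero
  refine (congrArg (piDiffHom n) harg).trans ?_
  rw [piDiffHom]
  erw [MonoidHom.noncommPiCoprod_mulSingle]
  rfl

/-- Sanity check: the dual variable `α_i` acts on `F` as `∂F/∂x_i`. -/
@[simp] lemma contract_X (i : Fin n) (F : MvPolynomial (Fin n) ℂ) :
    contract (X i) F = pderiv i F := by
  rw [contract, apolarAlgHom_X]; rfl

/-- The apolar (annihilator) ideal `F^⊥ = {Θ ∈ T : Θ ⌟ F = 0}` of a polynomial `F`. -/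
def apolarIdeal (F : MvPolynomial (Fin n) ℂ) : Ideal (MvPolynomial (Fin n) ℂ) where
  carrier := {Θ | contract Θ F = 0}
  zero_mem' := by simp [contract]
  add_mem' := by
    intro a b ha hb
    simp only [Set.mem_setOf_eq, contract, map_add, LinearMap.add_apply] at *
    rw [ha, hb, add_zero]
  smul_mem' := by
    intro c x hx
    simp only [Set.mem_setOf_eq, smul_eq_mul, contract, map_mul, Module.End.mul_apply] at *
    rw [hx, map_zero]

@[simp] lemma mem_apolarIdeal {Θ F : MvPolynomial (Fin n) ℂ} :
    Θ ∈ apolarIdeal F ↔ contract Θ F = 0 := Iff.rfl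

variable (n)

/-- The irrelevant maximal ideal `m = ⟨α_1,…,α_n⟩` of `T`. -/
def irrIdeal : Ideal (MvPolynomial (Fin n) ℂ) :=
  Ideal.span (Set.range X)

variable {n}

/-- The homogeneous ideal `I` has a minimal generator of degree `k`, i.e. `(I/mI)_k ≠ 0`:
there is a homogeneous element of `I` of degree `k` not belonging to `m * I`. -/
def HasMinGenOfDegree (I : Ideal (MvPolynomial (Fin n) ℂ)) (k : ℕ) : Prop :=
  ∃ Θ, Θ ∈ I ∧ Θ.IsHomogeneous k ∧ Θ ∉ irrIdeal n * I

/-- The homogeneous ideal `I` has at least `r` minimal generators of degree `k`, i.e.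
`dim_ℂ (I/mI)_k ≥ r`: there are `r` homogeneous degree-`k` elements of `I` that are
linearly independent modulo `m * I`. -/
def MinGensAtLeast (I : Ideal (MvPolynomial (Fin n) ℂ)) (k r : ℕ) : Prop :=
  ∃ Θ : Fin r → MvPolynomial (Fin n) ℂ,
    (∀ i, Θ i ∈ I ∧ (Θ i).IsHomogeneous k) ∧
    ∀ c : Fin r → ℂ, (∑ i, c i • Θ i) ∈ irrIdeal n * I → ∀ i, c i = 0

/-- `F` is an `s`-fold direct sum of degree `d`: `F = F_1 + ⋯ + F_s` where the `F_i` are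
nonzero degree-`d` forms in independent subspaces `V_i` of the space of linear forms with
`V = V_1 ⊕ ⋯ ⊕ V_s` (i.e. in disjoint sets of variables, up to linear change of variables;
`F_i ∈ S^d V_i` is expressed as membership in the subalgebra generated by `V_i`). -/
def IsSFoldDirectSum (F : MvPolynomial (Fin n) ℂ) (d s : ℕ) : Prop :=
  ∃ (V : Fin s → Submodule ℂ (MvPolynomial (Fin n) ℂ))
    (G : Fin s → MvPolynomial (Fin n) ℂ),
    (∀ i, V i ≤ homogeneousSubmodule (Fin n) ℂ 1) ∧
    iSupIndep V ∧
    (⨆ i, V i) = homogeneousSubmodule (Fin n) ℂ 1 ∧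
    (∀ i, G i ≠ 0 ∧ (G i).IsHomogeneous d ∧ G i ∈ Algebra.adjoin ℂ (V i : Set _)) ∧
    F = ∑ i, G i

/-- `F` is a direct sum: `F = F₁ + F₂` with `F₁ ∈ S^d V₁`, `F₂ ∈ S^d V₂` nonzero and
`V = V₁ ⊕ V₂`. -/
def IsDirectSum (F : MvPolynomial (Fin n) ℂ) (d : ℕ) : Prop :=
  IsSFoldDirectSum F d 2

/-- `F` is a limit (as `t → 0`) of `s`-fold direct sums of degree `d`. -/
def IsLimitOfSFoldDirectSums (F : MvPolynomial (Fin n) ℂ) (d s : ℕ) : Prop :=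
  ∃ G : ℂ → MvPolynomial (Fin n) ℂ,
    (∀ t : ℂ, t ≠ 0 → IsSFoldDirectSum (G t) d s) ∧
    ∀ m : Fin n →₀ ℕ,
      Filter.Tendsto (fun t => MvPolynomial.coeff m (G t))
        (nhdsWithin (0 : ℂ) {(0 : ℂ)}ᶜ) (nhds (MvPolynomial.coeff m F))

/-- `F` is a limit of direct sums. -/
def IsLimitOfDirectSums (F : MvPolynomial (Fin n) ℂ) (d : ℕ) : Prop :=
  IsLimitOfSFoldDirectSums F d 2

/-- `F` is concise: `(F^⊥)_1 = 0`, i.e. `F` cannot be written using fewer variables. -/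
def Concise (F : MvPolynomial (Fin n) ℂ) : Prop :=
  ∀ Θ : MvPolynomial (Fin n) ℂ, Θ.IsHomogeneous 1 → contract Θ F = 0 → Θ = 0

end Apolarity

/-!
For a linear form `ℓ` in two variables, the derivation `m ↦ ∂₁ℓ ∂₀m - ∂₀ℓ ∂₁m` kills `ℓ` and
sends every linear form not proportional to `ℓ` to a nonzero constant. Applied to a relation
`∑ cᵢ ℓᵢ ^ d = 0` it removes the term of `ℓ` and lowers `d` by one, so by induction the `d`-th
powers of at most `d + 1` pairwise non-proportional linear forms are linearly independent.
If `⟨m₁⟩` were neither `⟨ℓ₁⟩` nor `⟨ℓ₂⟩`, then `c₁ ℓ₁ ^ d + c₂ ℓ₂ ^ d = c₁' m₁ ^ d + c₂' m₂ ^ d`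
would be a relation among at most four such powers (three when `m₂` is proportional to an `ℓᵢ`)
in which `c₁` or `c₂` survives as a coefficient, impossible for `d ≥ 3`.
-/

section

variable {K V : Type*} [Field K] [AddCommGroup V] [Module K V]

lemma linearIndependent_pair_iff_span_singleton_ne {x y : V} (hx : x ≠ 0) (hy : y ≠ 0) :
    LinearIndependent K ![x, y] ↔ K ∙ x ≠ K ∙ y := by
  rw [LinearIndependent.pair_iff' hx, Ne, Submodule.span_singleton_eq_span_singleton]
  constructor
  · rintro h ⟨z, hz⟩
    exact h z hz
  · rintro h a rfl
    exact h ⟨Units.mk0 a (left_ne_zero_of_smul hy), rfl⟩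

lemma pairwise_linearIndependent_pair_of_lt {ι : Type*} [LinearOrder ι] {v : ι → V}
    (h : ∀ ⦃i j⦄, i < j → LinearIndependent K ![v i, v j]) :
    Pairwise fun i j => LinearIndependent K ![v i, v j] := fun _ _ hij =>
  hij.lt_or_gt.elim (fun hlt => h hlt) fun hgt => LinearIndependent.pair_symm_iff.mp (h hgt)

end

namespace MvPolynomial

variable {K : Type*} [Field K]

lemma IsHomogeneous.exists_eq_C_mul_X_add_C_mul_X {ℓ : MvPolynomial (Fin 2) K}
    (hℓ : ℓ.IsHomogeneous 1) : ∃ a b : K, ℓ = C a * X 0 + C b * X 1 := by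
  rw [← mem_homogeneousSubmodule, homogeneousSubmodule_one_eq_span_X,
    Submodule.mem_span_range_iff_exists_fun] at hℓ
  obtain ⟨c, rfl⟩ := hℓ
  exact ⟨c 0, c 1, by simp [Fin.sum_univ_two, smul_eq_C_mul]⟩

noncomputable def jacobianDerivation (ℓ : MvPolynomial (Fin 2) K) :
    Derivation K (MvPolynomial (Fin 2) K) (MvPolynomial (Fin 2) K) :=
  pderiv 1 ℓ • pderiv 0 - pderiv 0 ℓ • pderiv 1

lemma jacobianDerivation_apply (ℓ m : MvPolynomial (Fin 2) K) :
    jacobianDerivation ℓ m = pderiv 1 ℓ * pderiv 0 m - pderiv 0 ℓ * pderiv 1 m := rfl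

lemma jacobianDerivation_self (ℓ : MvPolynomial (Fin 2) K) : jacobianDerivation ℓ ℓ = 0 := by
  rw [jacobianDerivation_apply]; ring

lemma exists_jacobianDerivation_eq_C {ℓ m : MvPolynomial (Fin 2) K} (hℓ : ℓ.IsHomogeneous 1)
    (hm : m.IsHomogeneous 1) (hind : LinearIndependent K ![m, ℓ]) :
    ∃ δ : K, δ ≠ 0 ∧ jacobianDerivation ℓ m = C δ := by
  obtain ⟨a, b, rfl⟩ := hℓ.exists_eq_C_mul_X_add_C_mul_X
  obtain ⟨p, q, rfl⟩ := hm.exists_eq_C_mul_X_add_C_mul_X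
  refine ⟨b * p - a * q, fun hδ => ?_, by simp [jacobianDerivation_apply]⟩
  have hδ' := congrArg (C (σ := Fin 2)) hδ
  simp only [map_sub, map_mul, map_zero] at hδ'
  rw [LinearIndependent.pair_iff] at hind
  -- a vanishing determinant makes `b • m - q • ℓ` and `a • m - p • ℓ` vanish
  obtain ⟨rfl, hq⟩ := hind b (-q) (by
    simp only [smul_eq_C_mul, map_neg]; linear_combination X 0 * hδ')
  obtain ⟨rfl, hp⟩ := hind a (-p) (by
    simp only [smul_eq_C_mul, map_neg]; linear_combination -X 1 * hδ')
  obtain rfl := neg_eq_zero.mp hq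
  obtain rfl := neg_eq_zero.mp hp
  simpa using hind 0 1 (by simp)

variable [CharZero K]

theorem eq_zero_of_sum_smul_pow_eq_zero {ι : Type*} {ℓ : ι → MvPolynomial (Fin 2) K}
    {s : Finset ι} (hℓ : ∀ i ∈ s, (ℓ i).IsHomogeneous 1) (h0 : ∀ i ∈ s, ℓ i ≠ 0)
    (hpair : (s : Set ι).Pairwise fun i j => LinearIndependent K ![ℓ i, ℓ j]) {d : ℕ}
    (hcard : s.card ≤ d + 1) {c : ι → K} (h : ∑ i ∈ s, c i • ℓ i ^ d = 0) :
    ∀ i ∈ s, c i = 0 := by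
  classical
  induction s using Finset.induction_on generalizing d c with
  | empty => simp
  | insert j s hj ih =>
    simp only [Finset.mem_insert, forall_eq_or_imp] at hℓ h0 ⊢
    rw [Finset.coe_insert, Set.pairwise_insert] at hpair
    rw [Finset.card_insert_of_notMem hj] at hcard
    rw [Finset.sum_insert hj] at h
    have hs : ∀ i ∈ s, c i = 0 := by
      choose! δ hδ hJ using fun i hi => exists_jacobianDerivation_eq_C hℓ.1 (hℓ.2 i hi)
        (hpair.2 i hi (ne_of_mem_of_not_mem hi hj).symm).2
      have hD := congrArg (jacobianDerivation (ℓ j)) h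
      rw [map_add, map_sum, map_zero, Derivation.map_smul, Derivation.leibniz_pow,
        jacobianDerivation_self, smul_zero, smul_zero, smul_zero, zero_add] at hD
      have ih' := ih hℓ.2 h0.2 hpair.1 (d := d - 1) (by omega) (c := fun i => c i * d * δ i) (by
        rw [← hD]
        refine Finset.sum_congr rfl fun i hi => ?_
        rw [Derivation.map_smul, Derivation.leibniz_pow, hJ i hi]
        simp only [smul_eq_C_mul, nsmul_eq_mul, map_mul, map_natCast]
        ring)
      intro i hi
      have hd : (d : K) ≠ 0 := by
        have := Finset.card_pos.mpr ⟨i, hi⟩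
        exact_mod_cast (show d ≠ 0 by omega)
      simpa [hd, hδ i hi] using ih' i hi
    refine ⟨?_, hs⟩
    rw [Finset.sum_eq_zero (fun i hi => by rw [hs i hi, zero_smul]), add_zero] at h
    exact (smul_eq_zero.mp h).resolve_right (pow_ne_zero _ h0.1)

theorem linearIndependent_pow {ι : Type*} [Fintype ι] {ℓ : ι → MvPolynomial (Fin 2) K}
    (hℓ : ∀ i, (ℓ i).IsHomogeneous 1) (h0 : ∀ i, ℓ i ≠ 0)
    (hpair : Pairwise fun i j => LinearIndependent K ![ℓ i, ℓ j]) {d : ℕ}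
    (hcard : Fintype.card ι ≤ d + 1) : LinearIndependent K fun i => ℓ i ^ d :=
  Fintype.linearIndependent_iff.mpr fun _ h i =>
    eq_zero_of_sum_smul_pow_eq_zero (s := .univ) (fun i _ => hℓ i) (fun i _ => h0 i)
      (fun _ _ _ _ hij => hpair hij) hcard h i (Finset.mem_univ i)

theorem span_singleton_eq_or_of_add_pow_eq {d : ℕ} (hd : 3 ≤ d) {c₁ c₂ c₁' c₂' : K}
    {ℓ₁ ℓ₂ m₁ m₂ : MvPolynomial (Fin 2) K} (hc₁ : c₁ ≠ 0) (hc₂ : c₂ ≠ 0)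
    (hℓ₁ : ℓ₁.IsHomogeneous 1) (hℓ₂ : ℓ₂.IsHomogeneous 1)
    (hm₁ : m₁.IsHomogeneous 1) (hm₂ : m₂.IsHomogeneous 1)
    (hlind : LinearIndependent K ![ℓ₁, ℓ₂]) (hmind : LinearIndependent K ![m₁, m₂])
    (h : c₁ • ℓ₁ ^ d + c₂ • ℓ₂ ^ d = c₁' • m₁ ^ d + c₂' • m₂ ^ d) :
    K ∙ m₁ = K ∙ ℓ₁ ∨ K ∙ m₁ = K ∙ ℓ₂ := by
  have hℓ₁0 : ℓ₁ ≠ 0 := by simpa using hlind.ne_zero 0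
  have hℓ₂0 : ℓ₂ ≠ 0 := by simpa using hlind.ne_zero 1
  have hm₁0 : m₁ ≠ 0 := by simpa using hmind.ne_zero 0
  have hm₂0 : m₂ ≠ 0 := by simpa using hmind.ne_zero 1
  by_contra! hne
  have hℓ₁m₁ : LinearIndependent K ![ℓ₁, m₁] :=
    (linearIndependent_pair_iff_span_singleton_ne hℓ₁0 hm₁0).mpr hne.1.symm
  have hℓ₂m₁ : LinearIndependent K ![ℓ₂, m₁] :=
    (linearIndependent_pair_iff_span_singleton_ne hℓ₂0 hm₁0).mpr hne.2.symm
  have hrel₃ (α β γ : K) (hαβγ : α • ℓ₁ ^ d + β • ℓ₂ ^ d + γ • m₁ ^ d = 0) :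
      α = 0 ∧ β = 0 := by
    have hli := linearIndependent_pow (ℓ := ![ℓ₁, ℓ₂, m₁]) (d := d)
      (by intro i; fin_cases i <;> assumption) (by intro i; fin_cases i <;> assumption)
      (pairwise_linearIndependent_pair_of_lt fun i j hij => by
        fin_cases i <;> fin_cases j <;> first | exact absurd hij (by decide) | assumption)
      (by simp only [Fintype.card_fin]; omega)
    have := Fintype.linearIndependent_iff.mp hli ![α, β, γ] (by simpa [Fin.sum_univ_three])
    exact ⟨this 0, this 1⟩
  by_cases hℓ₁m₂ : LinearIndependent K ![ℓ₁, m₂]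
  · by_cases hℓ₂m₂ : LinearIndependent K ![ℓ₂, m₂]
    · have hli := linearIndependent_pow (ℓ := ![ℓ₁, ℓ₂, m₁, m₂]) (d := d)
        (by intro i; fin_cases i <;> assumption) (by intro i; fin_cases i <;> assumption)
        (pairwise_linearIndependent_pair_of_lt fun i j hij => by
          fin_cases i <;> fin_cases j <;> first | exact absurd hij (by decide) | assumption)
        (by simp only [Fintype.card_fin]; omega)
      refine hc₁ (Fintype.linearIndependent_iff.mp hli ![c₁, c₂, -c₁', -c₂'] ?_ 0)
      simp only [Fin.sum_univ_four, Matrix.cons_val_zero, Matrix.cons_val_one, Matrix.cons_val]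
      linear_combination (norm := module) h
    · obtain ⟨a, rfl⟩ : ∃ a : K, a • ℓ₂ = m₂ := by
        simpa [LinearIndependent.pair_iff' hℓ₂0] using hℓ₂m₂
      refine hc₁ (hrel₃ c₁ (c₂ - c₂' * a ^ d) (-c₁') ?_).1
      rw [smul_pow] at h
      linear_combination (norm := module) h
  · obtain ⟨a, rfl⟩ : ∃ a : K, a • ℓ₁ = m₂ := by
      simpa [LinearIndependent.pair_iff' hℓ₁0] using hℓ₁m₂
    refine hc₂ (hrel₃ (c₁ - c₂' * a ^ d) c₂ (-c₁') ?_).2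
    rw [smul_pow] at h
    linear_combination (norm := module) h

end MvPolynomial

theorem binary_direct_sum_unique_decomposition_general
    (d : ℕ) (hd : 3 ≤ d) (F : MvPolynomial (Fin 2) ℂ)
    (c₁ c₂ c₁' c₂' : ℂ) (ℓ₁ ℓ₂ m₁ m₂ : MvPolynomial (Fin 2) ℂ)
    (hc₁ : c₁ ≠ 0) (hc₂ : c₂ ≠ 0)
    (hℓ₁ : ℓ₁.IsHomogeneous 1) (hℓ₂ : ℓ₂.IsHomogeneous 1)
    (hm₁ : m₁.IsHomogeneous 1) (hm₂ : m₂.IsHomogeneous 1)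
    (hlind : LinearIndependent ℂ ![ℓ₁, ℓ₂]) (hmind : LinearIndependent ℂ ![m₁, m₂])
    (hF₁ : F = c₁ • ℓ₁ ^ d + c₂ • ℓ₂ ^ d) (hF₂ : F = c₁' • m₁ ^ d + c₂' • m₂ ^ d) :
    (Submodule.span ℂ {ℓ₁} = Submodule.span ℂ {m₁} ∧
      Submodule.span ℂ {ℓ₂} = Submodule.span ℂ {m₂}) ∨
    (Submodule.span ℂ {ℓ₁} = Submodule.span ℂ {m₂} ∧
      Submodule.span ℂ {ℓ₂} = Submodule.span ℂ {m₁}) := by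
  have h₁ := span_singleton_eq_or_of_add_pow_eq hd hc₁ hc₂ hℓ₁ hℓ₂ hm₁ hm₂ hlind hmind
    (hF₁.symm.trans hF₂)
  have h₂ := span_singleton_eq_or_of_add_pow_eq hd hc₁ hc₂ hℓ₁ hℓ₂ hm₂ hm₁ hlind
    (LinearIndependent.pair_symm_iff.mp hmind) (by rw [← hF₁, hF₂, add_comm])
  have hne : ℂ ∙ m₁ ≠ ℂ ∙ m₂ := (linearIndependent_pair_iff_span_singleton_ne
    (by simpa using hmind.ne_zero 0) (by simpa using hmind.ne_zero 1)).mp hmind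
  rcases h₁ with h₁ | h₁ <;> rcases h₂ with h₂ | h₂
  · exact absurd (h₁.trans h₂.symm) hne
  · exact .inl ⟨h₁.symm, h₂.symm⟩
  · exact .inr ⟨h₂.symm, h₁.symm⟩
  · exact absurd (h₁.trans h₂.symm) hne

/-- A binary form of degree `d ≥ 3` which is a direct sum
`F = c₁ ℓ₁^d + c₂ ℓ₂^d` has a uniquely determined decomposition: the unordered pair of
lines `{⟨ℓ₁⟩, ⟨ℓ₂⟩}` is determined by `F`. -/
theorem binary_direct_sum_unique_decomposition
    (d : ℕ) (hd : 3 ≤ d) (F : MvPolynomial (Fin 2) ℂ)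
    (c₁ c₂ c₁' c₂' : ℂ) (ℓ₁ ℓ₂ m₁ m₂ : MvPolynomial (Fin 2) ℂ)
    (hc₁ : c₁ ≠ 0) (hc₂ : c₂ ≠ 0) (hc₁' : c₁' ≠ 0) (hc₂' : c₂' ≠ 0)
    (hℓ₁ : ℓ₁.IsHomogeneous 1) (hℓ₂ : ℓ₂.IsHomogeneous 1)
    (hm₁ : m₁.IsHomogeneous 1) (hm₂ : m₂.IsHomogeneous 1)
    (hlind : LinearIndependent ℂ ![ℓ₁, ℓ₂]) (hmind : LinearIndependent ℂ ![m₁, m₂])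
    (hF₁ : F = c₁ • ℓ₁ ^ d + c₂ • ℓ₂ ^ d) (hF₂ : F = c₁' • m₁ ^ d + c₂' • m₂ ^ d) :
    (Submodule.span ℂ {ℓ₁} = Submodule.span ℂ {m₁} ∧
      Submodule.span ℂ {ℓ₂} = Submodule.span ℂ {m₂}) ∨
    (Submodule.span ℂ {ℓ₁} = Submodule.span ℂ {m₂} ∧
      Submodule.span ℂ {ℓ₂} = Submodule.span ℂ {m₁}) :=
  binary_direct_sum_unique_decomposition_general d hd F c₁ c₂ c₁' c₂' ℓ₁ ℓ₂ m₁ m₂ hc₁ hc₂ hℓ₁ hℓ₂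
    hm₁ hm₂ hlind hmind hF₁ hF₂
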